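/- arXiv:1406.3721 — 11 statements merged into one kernel-verified Lean document; each statement's English description precedes it below -/
import Mathlib

section
/- If φ is an algebraic closure operator on a set X with φ(∅)=∅ satisfying the anti-exchange property, then for every x ∈ X, the set φ({x}) \ {x} is closed under φ. -/
/-- φ is a closure operator: extensive, monotone, idempotent. -/
def IsClosureOp {X : Type*} (φ : Set X → Set X) : Prop :=
  (∀ A, A ⊆ φ A) ∧ (∀ A B, A ⊆ B → φ A ⊆ φ B) ∧ (∀ A, φ (φ A) = φ A)

/-- φ is algebraic (finitary): the closure of a set is the union of closures of its
finite subsets. -/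
def IsAlgebraicOp {X : Type*} (φ : Set X → Set X) : Prop :=
  ∀ A, φ A = ⋃₀ {T | ∃ B, B ⊆ A ∧ B.Finite ∧ T = φ B}

/-- The anti-exchange property. -/
def AntiExchange {X : Type*} (φ : Set X → Set X) : Prop :=
  ∀ (x y : X) (A : Set X), x ≠ y → φ A = A → x ∉ A →
    x ∈ φ (A ∪ {y}) → y ∉ φ (A ∪ {x})

/-- A convex geometry: a zero-closure operator with the anti-exchange property. -/
def IsConvexGeometry {X : Type*} (φ : Set X → Set X) : Prop :=
  IsClosureOp φ ∧ φ ∅ = ∅ ∧ AntiExchange φ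

/-- An algebraic convex geometry. -/
def IsAlgConvexGeometry {X : Type*} (φ : Set X → Set X) : Prop :=
  IsClosureOp φ ∧ IsAlgebraicOp φ ∧ φ ∅ = ∅ ∧ AntiExchange φ

/-- An algebraic subset of Pow X : closed under arbitrary intersections
(with ⋂₀ ∅ = X) and under unions of nonempty up-directed subfamilies. -/
def IsAlgSubset {X : Type*} (F : Set (Set X)) : Prop :=
  (∀ S ⊆ F, ⋂₀ S ∈ F) ∧
  (∀ S ⊆ F, S.Nonempty → (∀ A ∈ S, ∀ B ∈ S, ∃ C ∈ S, A ∪ B ⊆ C) → ⋃₀ S ∈ F)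

/-- A maximal chain in the lattice of φ-closed sets. -/
def IsMaxChainOfClosed {X : Type*} (φ : Set X → Set X) (C : Set (Set X)) : Prop :=
  C ⊆ {Y | φ Y = Y} ∧ IsChain (· ⊆ ·) C ∧
  ∀ T, φ T = T → (∀ A ∈ C, T ⊆ A ∨ A ⊆ T) → T ∈ C

/-! By finitarity it suffices to show `x ∉ φ B` for every finite `B ⊆ φ {x} \ {x}`, and this
goes by induction on `B`: if `x ∉ φ s` and `a ∈ φ {x}` with `a ≠ x`, anti-exchange for the
closed set `φ s` forbids `x ∈ φ (φ s ∪ {a})`, since `a ∈ φ (φ s ∪ {x})`. -/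

namespace IsClosureOp

variable {X : Type*} {φ : Set X → Set X}

lemma closure_subset_closure_of_subset_closure (hφ : IsClosureOp φ) {A B : Set X}
    (h : A ⊆ φ B) : φ A ⊆ φ B :=
  (hφ.2.1 _ _ h).trans (hφ.2.2 B).subset

lemma notMem_closure_insert (hφ : IsClosureOp φ) (haep : AntiExchange φ) {x a : X}
    {s : Set X} (hxs : x ∉ φ s) (ha : a ∈ φ {x}) (hax : a ≠ x) : x ∉ φ (insert a s) := by
  intro hx
  have hx' : x ∈ φ (φ s ∪ {a}) :=
    hφ.2.1 _ _ (Set.insert_subset_iff.2 ⟨Or.inr rfl, fun y hy => Or.inl (hφ.1 s hy)⟩) hx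
  exact haep x a (φ s) hax.symm (hφ.2.2 s) hxs hx' (hφ.2.1 _ _ Set.subset_union_right ha)

lemma notMem_closure_of_finite_subset (hφ : IsClosureOp φ) (hzero : φ ∅ = ∅)
    (haep : AntiExchange φ) {x : X} {B : Set X} (hB : B.Finite) (hBx : B ⊆ φ {x} \ {x}) :
    x ∉ φ B := by
  induction B, hB using Set.Finite.induction_on with
  | empty => simp [hzero]
  | @insert a s _ _ ih =>
    obtain ⟨⟨ha, hax⟩, hs⟩ := Set.insert_subset_iff.1 hBx
    exact hφ.notMem_closure_insert haep (ih hs) ha hax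

end IsClosureOp

lemma IsAlgebraicOp.exists_finite_subset_of_mem {X : Type*} {φ : Set X → Set X}
    (halg : IsAlgebraicOp φ) {A : Set X} {z : X} (hz : z ∈ φ A) :
    ∃ B ⊆ A, B.Finite ∧ z ∈ φ B := by
  rw [halg A] at hz
  obtain ⟨_, ⟨B, hBA, hB, rfl⟩, hzB⟩ := hz
  exact ⟨B, hBA, hB, hzB⟩

/-- In an algebraic convex geometry, φ({x}) \ {x} is closed for every x. -/
theorem stmt0 {X : Type*} (φ : Set X → Set X)
    (hclo : IsClosureOp φ) (halg : IsAlgebraicOp φ) (hzero : φ ∅ = ∅)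
    (haep : AntiExchange φ) :
    ∀ x : X, φ (φ {x} \ {x}) = φ {x} \ {x} := by
  intro x
  refine Set.Subset.antisymm (fun z hz => ⟨?_, ?_⟩) (hclo.1 _)
  · exact hclo.closure_subset_closure_of_subset_closure Set.sdiff_subset hz
  · rintro rfl
    obtain ⟨B, hBx, hB, hzB⟩ := halg.exists_finite_subset_of_mem hz
    exact hclo.notMem_closure_of_finite_subset hzero haep hB hBx hzB
end

section
/- In an algebraic convex geometry (X, φ), for every x ∈ X, the closed set φ({x}) is a completely join-irreducible element of the lattice of closed sets Cld(X,φ). -/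
section

variable {X : Type*} {φ : Set X → Set X}

theorem AntiExchange.notMem_closure_insert (hclo : IsClosureOp φ) (haep : AntiExchange φ)
    {x y : X} {G : Set X} (hxG : x ∉ φ G) (hy : y ∈ φ {x} \ {x}) : x ∉ φ (insert y G) := by
  obtain ⟨hext, hmono, hidem⟩ := hclo
  intro hx
  have hxy : x ≠ y := fun h => hy.2 h.symm
  have hx' : x ∈ φ (φ G ∪ {y}) :=
    hmono _ _ (Set.insert_subset (Or.inr rfl) ((hext G).trans Set.subset_union_left)) hx
  have hy' : y ∈ φ (φ G ∪ {x}) := hmono _ _ Set.subset_union_right hy.1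
  exact haep x y (φ G) hxy (hidem G) hxG hx' hy'

theorem notMem_closure_of_finite_subset_closure_singleton_diff (hclo : IsClosureOp φ)
    (hzero : φ ∅ = ∅) (haep : AntiExchange φ) {x : X} {F : Set X} (hF : F.Finite)
    (hFx : F ⊆ φ {x} \ {x}) : x ∉ φ F := by
  induction F, hF using Set.Finite.induction_on with
  | empty => simp [hzero]
  | @insert y G _ _ ih =>
    have hinsert := Set.insert_subset_iff.mp hFx
    exact haep.notMem_closure_insert hclo (ih hinsert.2) hinsert.1

theorem notMem_closure_closure_singleton_diff (hclo : IsClosureOp φ) (halg : IsAlgebraicOp φ)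
    (hzero : φ ∅ = ∅) (haep : AntiExchange φ) (x : X) : x ∉ φ (φ {x} \ {x}) := by
  rw [halg]
  rintro ⟨_, ⟨F, hFx, hF, rfl⟩, hxF⟩
  exact notMem_closure_of_finite_subset_closure_singleton_diff hclo hzero haep hF hFx hxF

end

/-- In an algebraic convex geometry, φ({x}) is completely join irreducible in the
lattice of closed sets: whenever φ({x}) is the join (i.e. closure of the union) of a
set S of closed sets, φ({x}) ∈ S. -/
theorem stmt1 {X : Type*} (φ : Set X → Set X)
    (hclo : IsClosureOp φ) (halg : IsAlgebraicOp φ) (hzero : φ ∅ = ∅)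
    (haep : AntiExchange φ) (x : X) :
    ∀ S : Set (Set X), (∀ A ∈ S, φ A = A) → φ {x} = φ (⋃₀ S) → φ {x} ∈ S := by
  intro S hS hx
  obtain ⟨hext, hmono, -⟩ := id hclo
  by_cases hxS : x ∈ ⋃₀ S
  · obtain ⟨A, hA, hxA⟩ := hxS
    have hxA_le : φ {x} ⊆ A := hS A hA ▸ hmono _ _ (Set.singleton_subset_iff.mpr hxA)
    have hA_le : A ⊆ φ {x} := hx ▸ (Set.subset_sUnion_of_mem hA).trans (hext _)
    rwa [← hxA_le.antisymm hA_le] at hA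
  · have hSx : ⋃₀ S ⊆ φ {x} \ {x} := fun a ha =>
      ⟨hx ▸ hext _ ha, fun hax => hxS (Set.mem_singleton_iff.mp hax ▸ ha)⟩
    exact absurd (hmono _ _ hSx (hx ▸ hext _ rfl))
      (notMem_closure_closure_singleton_diff hclo halg hzero haep x)
end

section
/- There exists a non-algebraic convex geometry in which φ({x}) \ {x} fails to be closed for some x: let X = ℕ ∪ {x} with x ∉ ℕ, and define φ(Y) = X if Y is cofinite in X or x ∈ Y, and φ(Y) = Y otherwise. Then φ is a zero-closure operator satisfying the anti-exchange property, φ({x}) = X, and X \ {x} = ℕ is not closed. -/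
/-- A non-algebraic convex geometry on ℕ ∪ {x} (encoded as Option ℕ, with
x = none) in which φ({x}) \ {x} is not closed. -/
theorem stmt2 :
    let φ : Set (Option ℕ) → Set (Option ℕ) :=
      fun Y => {z | z ∈ Y ∨ Yᶜ.Finite ∨ none ∈ Y}
    IsClosureOp φ ∧ φ ∅ = ∅ ∧ AntiExchange φ ∧ ¬ IsAlgebraicOp φ ∧
      φ {none} = Set.univ ∧ φ ({none}ᶜ) ≠ ({none}ᶜ : Set (Option ℕ)) := by
  intro φ
  have hbig : ∀ Y : Set (Option ℕ), (Yᶜ.Finite ∨ none ∈ Y) → φ Y = Set.univ := by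
    intro Y h
    ext z; simp only [φ, Set.mem_setOf_eq, Set.mem_univ, iff_true]
    exact Or.inr h
  have hsmall : ∀ Y : Set (Option ℕ), ¬(Yᶜ.Finite ∨ none ∈ Y) → φ Y = Y := by
    intro Y h
    ext z; simp only [φ, Set.mem_setOf_eq]
    exact ⟨fun hz => hz.elim id (fun hz => absurd hz h), Or.inl⟩
  refine ⟨⟨?_, ?_, ?_⟩, ?_, ?_, ?_, ?_, ?_⟩
  · intro A z hz; exact Or.inl hz
  · intro A B hAB z hz
    rcases hz with hz | hz | hz
    · exact Or.inl (hAB hz)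
    · exact Or.inr (Or.inl (hz.subset (Set.compl_subset_compl.mpr hAB)))
    · exact Or.inr (Or.inr (hAB hz))
  · intro A
    by_cases h : Aᶜ.Finite ∨ none ∈ A
    · rw [hbig A h, hbig Set.univ (Or.inr (Set.mem_univ _))]
    · rw [hsmall A h, hsmall A h]
  · refine hsmall ∅ ?_
    rintro (h | h)
    · rw [Set.compl_empty] at h
      exact Set.infinite_univ h
    · exact h
  · intro x y A hxy hA hxA hx
    -- A is "small": Aᶜ infinite and none ∉ A
    have hAs : ¬(Aᶜ.Finite ∨ none ∈ A) := by
      intro h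
      have := hbig A h
      rw [hA] at this
      exact hxA (this ▸ Set.mem_univ x)
    push_neg at hAs
    obtain ⟨hAcInf, hnA⟩ := hAs
    have hinf : ∀ w : Option ℕ, ¬((A ∪ {w})ᶜ).Finite := by
      intro w hf
      apply hAcInf
      have : Aᶜ ⊆ (A ∪ {w})ᶜ ∪ {w} := by
        intro z hz
        by_cases hzw : z = w
        · exact Or.inr hzw
        · simp only [Set.mem_compl_iff, Set.mem_union, Set.mem_singleton_iff] at hz ⊢
          exact Or.inl (not_or.mpr ⟨hz, hzw⟩)
      exact (hf.union (Set.finite_singleton w)).subset this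
    -- from hx deduce y = none
    have hy : y = none := by
      rcases hx with hx | hx | hx
      · rcases hx with hx | hx
        · exact absurd hx hxA
        · exact absurd hx (by simpa using hxy)
      · exact absurd hx (hinf y)
      · rcases hx with hx | hx
        · exact absurd hx hnA
        · simp at hx; exact hx.symm
    subst hy
    rintro (h | h | h)
    · rcases h with h | h
      · exact hnA h
      · simp at h; exact hxy h.symm
    · exact hinf x h
    · rcases h with h | h
      · exact hnA h
      · simp at h; exact hxy h.symm
  · intro halg
    have h1 : none ∈ φ ({none}ᶜ : Set (Option ℕ)) := by
      rw [hbig _ (Or.inl (by simp))]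
      trivial
    rw [halg] at h1
    obtain ⟨T, ⟨B, hBsub, hBfin, rfl⟩, hmem⟩ := h1
    have hBs : ¬(Bᶜ.Finite ∨ none ∈ B) := by
      rintro (h | h)
      · have : (Set.univ : Set (Option ℕ)).Finite := by
          have := hBfin.union h
          rwa [Set.union_compl_self] at this
        exact Set.infinite_univ this
      · exact (hBsub h) rfl
    rw [hsmall B hBs] at hmem
    exact (hBsub hmem) rfl
  · exact hbig _ (Or.inr rfl)
  · rw [hbig _ (Or.inl (by simp))]
    intro h
    have hn : none ∈ ({none}ᶜ : Set (Option ℕ)) := by rw [← h]; trivial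
    exact hn rfl
end

section
/- In any convex geometry (X, φ) (no algebraicity assumed), if closed sets X₁ ⊂ X₂ form a covering pair (X₁ ≺ X₂) in the lattice of closed sets, then |X₂ \ X₁| = 1. -/
/-- In any convex geometry, a covering pair of closed sets differs by exactly one
element. -/
theorem stmt3 {X : Type*} (φ : Set X → Set X)
    (hcg : IsConvexGeometry φ) (X₁ X₂ : Set X)
    (h₁ : φ X₁ = X₁) (h₂ : φ X₂ = X₂) (hlt : X₁ ⊂ X₂)
    (hcov : ∀ T, φ T = T → X₁ ⊂ T → T ⊂ X₂ → False) :
    ∃ x, X₂ \ X₁ = {x} := by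
  obtain ⟨⟨hext, hmono, hidem⟩, _, hae⟩ := hcg
  obtain ⟨hsub, hne⟩ := hlt
  obtain ⟨x, hxX₂, hxX₁⟩ : ∃ x, x ∈ X₂ ∧ x ∉ X₁ := by
    by_contra h
    push_neg at h
    exact hne fun a ha => h a ha
  -- key: for any z ∈ X₂ \ X₁, φ (X₁ ∪ {z}) = X₂
  have key : ∀ z, z ∈ X₂ → z ∉ X₁ → φ (X₁ ∪ {z}) = X₂ := by
    intro z hz hz'
    have hcl : φ (φ (X₁ ∪ {z})) = φ (X₁ ∪ {z}) := hidem _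
    have hsub2 : φ (X₁ ∪ {z}) ⊆ X₂ := by
      have : X₁ ∪ {z} ⊆ X₂ := Set.union_subset hsub (by simpa using hz)
      calc φ (X₁ ∪ {z}) ⊆ φ X₂ := hmono _ _ this
        _ = X₂ := h₂
    have hstrict : X₁ ⊂ φ (X₁ ∪ {z}) := by
      constructor
      · exact (Set.subset_union_left).trans (hext _)
      · intro hcontra
        exact hz' (hcontra (hext _ (Or.inr rfl)))
    rcases eq_or_ne (φ (X₁ ∪ {z})) X₂ with h | h
    · exact h
    · exact absurd (hcov _ hcl hstrict (lt_of_le_of_ne hsub2 h)) (fun a => a)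
  refine ⟨x, Set.eq_singleton_iff_unique_mem.mpr ⟨⟨hxX₂, hxX₁⟩, ?_⟩⟩
  rintro y ⟨hyX₂, hyX₁⟩
  by_contra hyx
  have h1 := key x hxX₂ hxX₁
  have h2 := key y hyX₂ hyX₁
  have hx_in : x ∈ φ (X₁ ∪ {y}) := h2 ▸ hxX₂
  have := hae x y X₁ (Ne.symm hyx) h₁ hxX₁ hx_in
  exact this (h1 ▸ hyX₂)
end

section
/- Let (X, φ) be an algebraic closure system with φ(∅)=∅ such that every covering pair X₁ ≺ X₂ of closed sets satisfies |X₂ \ X₁| = 1. Then φ satisfies the anti-exchange property, i.e., (X, φ) is a convex geometry. -/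
theorem sUnion_chain_closed' {X : Type*} (φ : Set X → Set X)
    (hclo : IsClosureOp φ) (halg : IsAlgebraicOp φ) (c : Set (Set X))
    (hc : IsChain (· ⊆ ·) c) (hne : c.Nonempty) (hcl : ∀ T ∈ c, φ T = T) :
    φ (⋃₀ c) = ⋃₀ c := by
  obtain ⟨hext, hmono, hidem⟩ := hclo
  apply Set.Subset.antisymm _ (hext _)
  rw [halg (⋃₀ c)]
  rintro z ⟨T, ⟨B, hBsub, hBfin, rfl⟩, hz⟩
  have hdir : DirectedOn (fun i j : Set X => id i ⊆ id j) c := by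
    intro a ha b hb
    rcases hc.total ha hb with h | h
    · exact ⟨b, hb, h, Set.Subset.rfl⟩
    · exact ⟨a, ha, Set.Subset.rfl, h⟩
  have hBsub' : (hBfin.toFinset : Set X) ⊆ ⋃ i ∈ c, id i := by
    rw [Set.Finite.coe_toFinset]
    simpa [Set.sUnion_eq_biUnion] using hBsub
  obtain ⟨T, hTc, hBT⟩ := hdir.exists_mem_subset_of_finset_subset_biUnion hne hBsub'
  rw [Set.Finite.coe_toFinset] at hBT
  exact ⟨T, hTc, (hcl T hTc) ▸ hmono _ _ hBT hz⟩

/-- An algebraic zero-closure system in which every covering pair of closed sets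
differs by exactly one element satisfies the anti-exchange property. -/
theorem stmt4 {X : Type*} (φ : Set X → Set X)
    (hclo : IsClosureOp φ) (halg : IsAlgebraicOp φ) (hzero : φ ∅ = ∅)
    (hcov : ∀ X₁ X₂ : Set X, φ X₁ = X₁ → φ X₂ = X₂ → X₁ ⊂ X₂ →
      (∀ T, φ T = T → X₁ ⊂ T → T ⊂ X₂ → False) → ∃ x, X₂ \ X₁ = {x}) :
    AntiExchange φ := by
  intro x y A hxy hA hxA hxAy hyAx
  obtain ⟨hext, hmono, hidem⟩ := hclo
  set B := φ (A ∪ {x}) with hBdef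
  have hyA : y ∉ A := by
    intro hyA
    apply hxA
    have : A ∪ {y} = A := by
      apply Set.Subset.antisymm _ Set.subset_union_left
      rintro z (hz | rfl) <;> [exact hz; exact hyA]
    rw [this, hA] at hxAy; exact hxAy
  have hAB : A ⊆ B := Set.Subset.trans Set.subset_union_left (hext _)
  have hxB : x ∈ B := hext _ (Or.inr rfl)
  have hyB : y ∈ B := hyAx
  have hBy : φ (A ∪ {y}) = B := by
    apply Set.Subset.antisymm
    · have : A ∪ {y} ⊆ B := by
        rintro z (hz | rfl) <;> [exact hAB hz; exact hyB]
      exact (hmono _ _ this).trans (hidem _).subset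
    · have : A ∪ {x} ⊆ φ (A ∪ {y}) := by
        rintro z (hz | rfl)
        · exact Set.Subset.trans Set.subset_union_left (hext _) hz
        · exact hxAy
      exact (hmono _ _ this).trans (hidem _).subset
  -- Zorn: maximal closed set between A and B avoiding x and y
  set S : Set (Set X) := {T | φ T = T ∧ A ⊆ T ∧ T ⊆ B ∧ x ∉ T ∧ y ∉ T} with hSdef
  have hAS : A ∈ S := ⟨hA, Set.Subset.rfl, hAB, hxA, hyA⟩
  obtain ⟨M, hAM, hMS, hMmax⟩ : ∃ M, A ⊆ M ∧ M ∈ S ∧ ∀ T ∈ S, M ⊆ T → T = M := by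
    obtain ⟨M, hAM, hMmax⟩ := zorn_subset_nonempty S (fun c hcS hc hne => by
      refine ⟨⋃₀ c, ⟨?_, ?_, ?_, ?_, ?_⟩, fun s hs => Set.subset_sUnion_of_mem hs⟩
      · exact sUnion_chain_closed' φ ⟨hext, hmono, hidem⟩ halg c hc hne
          (fun T hT => (hcS hT).1)
      · obtain ⟨T, hT⟩ := hne
        exact Set.Subset.trans (hcS hT).2.1 (Set.subset_sUnion_of_mem hT)
      · exact Set.sUnion_subset (fun T hT => (hcS hT).2.2.1)
      · rintro ⟨T, hT, hxT⟩; exact (hcS hT).2.2.2.1 hxT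
      · rintro ⟨T, hT, hyT⟩; exact (hcS hT).2.2.2.2 hyT) A hAS
    exact ⟨M, hAM, hMmax.1, fun T hT hMT => Set.Subset.antisymm (hMmax.2 hT hMT) hMT⟩
  obtain ⟨hMcl, hAM', hMB, hxM, hyM⟩ := hMS
  have hMBx : φ (M ∪ {x}) = B := by
    apply Set.Subset.antisymm
    · have : M ∪ {x} ⊆ B := by rintro z (hz | rfl) <;> [exact hMB hz; exact hxB]
      exact (hmono _ _ this).trans (hidem _).subset
    · exact hmono _ _ (Set.union_subset_union_left _ hAM')
  have hMBy : φ (M ∪ {y}) = B := by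
    apply Set.Subset.antisymm
    · have : M ∪ {y} ⊆ B := by rintro z (hz | rfl) <;> [exact hMB hz; exact hyB]
      exact (hmono _ _ this).trans (hidem _).subset
    · rw [← hBy]; exact hmono _ _ (Set.union_subset_union_left _ hAM')
  have hMssB : M ⊂ B := ⟨hMB, fun h => hxM (h hxB)⟩
  obtain ⟨z, hz⟩ := hcov M B hMcl (hidem _) hMssB (by
    intro T hTcl hMT hTB
    by_cases hxT : x ∈ T
    · have : B ⊆ T := by
        rw [← hMBx]
        have : M ∪ {x} ⊆ T := by rintro w (hw | rfl) <;> [exact hMT.1 hw; exact hxT]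
        exact (hmono _ _ this).trans hTcl.subset
      exact hTB.2 this
    by_cases hyT : y ∈ T
    · have : B ⊆ T := by
        rw [← hMBy]
        have : M ∪ {y} ⊆ T := by rintro w (hw | rfl) <;> [exact hMT.1 hw; exact hyT]
        exact (hmono _ _ this).trans hTcl.subset
      exact hTB.2 this
    · have : T ∈ S := ⟨hTcl, Set.Subset.trans hAM' hMT.1, hTB.1, hxT, hyT⟩
      exact hMT.2 ((hMmax T this hMT.1) ▸ Set.Subset.rfl))
  have hx' : x ∈ B \ M := ⟨hxB, hxM⟩
  have hy' : y ∈ B \ M := ⟨hyB, hyM⟩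
  rw [hz] at hx' hy'
  exact hxy (hx'.trans hy'.symm)
end

section
/- Let (φᵢ)ᵢ∈I be a family of zero-closure operators on X each satisfying the anti-exchange property. Define ψ(A) = ⋂ᵢ φᵢ(A). Then ψ is a zero-closure operator on X satisfying the anti-exchange property. -/
/-- The pointwise intersection of a (nonempty) family of zero-closure operators with
the anti-exchange property is a zero-closure operator with the anti-exchange
property. -/
theorem stmt6 {X : Type*} {I : Type*} [Nonempty I] (φ : I → Set X → Set X)
    (hclo : ∀ i, IsClosureOp (φ i)) (hzero : ∀ i, φ i ∅ = ∅)
    (haep : ∀ i, AntiExchange (φ i))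
    (ψ : Set X → Set X) (hψ : ∀ A, ψ A = ⋂ i, φ i A) :
    IsClosureOp ψ ∧ ψ ∅ = ∅ ∧ AntiExchange ψ := by
  have ext := fun i => (hclo i).1
  have mono := fun i => (hclo i).2.1
  have idem := fun i => (hclo i).2.2
  have hsub : ∀ A i, ψ A ⊆ φ i A := fun A i => by
    rw [hψ]; exact Set.iInter_subset _ i
  have hext : ∀ A, A ⊆ ψ A := fun A => by
    rw [hψ]; exact Set.subset_iInter fun i => ext i A
  have hmono : ∀ A B, A ⊆ B → ψ A ⊆ ψ B := fun A B h => by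
    rw [hψ, hψ]; exact Set.iInter_mono fun i => mono i A B h
  have hidem : ∀ A, ψ (ψ A) = ψ A := by
    intro A
    apply Set.Subset.antisymm
    · have key : ∀ i, ψ (ψ A) ⊆ φ i A := fun i =>
        calc ψ (ψ A) ⊆ φ i (ψ A) := hsub _ i
          _ ⊆ φ i (φ i A) := mono i _ _ (hsub A i)
          _ = φ i A := by rw [idem i A]
      calc ψ (ψ A) ⊆ ⋂ i, φ i A := Set.subset_iInter key
        _ = ψ A := (hψ A).symm
    · exact hext (ψ A)
  refine ⟨⟨hext, hmono, hidem⟩, ?_, ?_⟩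
  · apply Set.Subset.antisymm
    · obtain ⟨i⟩ := ‹Nonempty I›
      calc ψ ∅ ⊆ φ i ∅ := hsub ∅ i
        _ = ∅ := hzero i
    · exact hext ∅
  · intro x y A hxy hA hxA hxmem hymem
    have hxA' : x ∉ ⋂ i, φ i A := by rw [← hψ, hA]; exact hxA
    rw [Set.mem_iInter] at hxA'
    push_neg at hxA'
    obtain ⟨i, hxi⟩ := hxA'
    by_cases hyi : y ∈ φ i A
    · apply hxi
      have h1 : A ∪ {y} ⊆ φ i A := Set.union_subset (ext i A) (by simpa using hyi)
      have := mono i _ _ h1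
      rw [idem i A] at this
      exact this (hsub _ i hxmem)
    · have hclosed : φ i (φ i A) = φ i A := idem i A
      have hx2 : x ∈ φ i (φ i A ∪ {y}) :=
        mono i _ _ (Set.union_subset_union_left _ (ext i A)) (hsub _ i hxmem)
      have := haep i x y (φ i A) hxy hclosed hxi hx2
      apply this
      exact mono i _ _ (Set.union_subset_union_left _ (ext i A)) (hsub _ i hymem)
end

section
/- Let ψ be a zero-closure operator on X satisfying the anti-exchange property, and let ρ be a closure operator on X whose closed sets are exactly the unions of (possibly singleton) up-directed families of ψ-closed sets. Then ρ also satisfies the anti-exchange property. -/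
section

variable {X : Type*}

theorem IsClosureOp.monotone {φ : Set X → Set X} (h : IsClosureOp φ) : Monotone φ :=
  fun A B => h.2.1 A B

theorem directed_image_union_singleton {ψ : Set X → Set X} (hψ : Monotone ψ)
    {S : Set (Set X)} (hS : ∀ B ∈ S, ∀ B' ∈ S, ∃ D ∈ S, B ∪ B' ⊆ D) (z : X) :
    ∀ T ∈ (fun B => ψ (B ∪ {z})) '' S, ∀ T' ∈ (fun B => ψ (B ∪ {z})) '' S,
      ∃ D ∈ (fun B => ψ (B ∪ {z})) '' S, T ∪ T' ⊆ D := by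
  rintro _ ⟨B, hB, rfl⟩ _ ⟨B', hB', rfl⟩
  obtain ⟨D, hD, hBD⟩ := hS B hB B' hB'
  refine ⟨ψ (D ∪ {z}), ⟨D, hD, rfl⟩, Set.union_subset ?_ ?_⟩ <;>
    exact hψ (Set.union_subset_union_left _ (by grind))

theorem closure_sUnion_union_singleton_subset {ψ ρ : Set X → Set X} (hψ : IsClosureOp ψ)
    (hρ : Monotone ρ)
    (hclosed : ∀ S : Set (Set X), S.Nonempty → (∀ B ∈ S, ψ B = B) →
      (∀ B ∈ S, ∀ B' ∈ S, ∃ D ∈ S, B ∪ B' ⊆ D) → ρ (⋃₀ S) = ⋃₀ S)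
    {S : Set (Set X)} (hSne : S.Nonempty) (hSdir : ∀ B ∈ S, ∀ B' ∈ S, ∃ D ∈ S, B ∪ B' ⊆ D)
    (z : X) :
    ρ (⋃₀ S ∪ {z}) ⊆ ⋃ B ∈ S, ψ (B ∪ {z}) := by
  set T := (fun B => ψ (B ∪ {z})) '' S
  have hT_closed : ρ (⋃₀ T) = ⋃₀ T :=
    hclosed T (hSne.image _) (by rintro _ ⟨B, -, rfl⟩; exact hψ.2.2 _)
      (directed_image_union_singleton hψ.monotone hSdir z)
  have hsub : ⋃₀ S ∪ {z} ⊆ ⋃₀ T := by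
    obtain ⟨B₀, hB₀⟩ := hSne
    rintro a (⟨B, hB, haB⟩ | rfl)
    · exact ⟨_, ⟨B, hB, rfl⟩, hψ.1 _ (Or.inl haB)⟩
    · exact ⟨_, ⟨B₀, hB₀, rfl⟩, hψ.1 _ (Or.inr rfl)⟩
  calc ρ (⋃₀ S ∪ {z}) ⊆ ρ (⋃₀ T) := hρ hsub
    _ = ⋃ B ∈ S, ψ (B ∪ {z}) := by rw [hT_closed, Set.sUnion_image]

end

theorem stmt7_general {X : Type*} (ψ ρ : Set X → Set X)
    (hψclo : IsClosureOp ψ) (hψaep : AntiExchange ψ)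
    (hρclo : IsClosureOp ρ)
    (hclosed : ∀ A : Set X, ρ A = A ↔
      ∃ S : Set (Set X), S.Nonempty ∧ (∀ B ∈ S, ψ B = B) ∧
        (∀ B ∈ S, ∀ B' ∈ S, ∃ D ∈ S, B ∪ B' ⊆ D) ∧ A = ⋃₀ S) :
    AntiExchange ρ := by
  intro x y A hxy hA hxA hxρ hyρ
  obtain ⟨S, hSne, hScl, hSdir, rfl⟩ := (hclosed A).mp hA
  have hbound := closure_sUnion_union_singleton_subset hψclo hρclo.monotone
    (fun S hne hcl hdir => (hclosed _).mpr ⟨S, hne, hcl, hdir, rfl⟩) hSne hSdir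
  obtain ⟨B₁, hB₁, hx⟩ := Set.mem_iUnion₂.mp (hbound y hxρ)
  obtain ⟨B₂, hB₂, hy⟩ := Set.mem_iUnion₂.mp (hbound x hyρ)
  obtain ⟨D, hD, hBD⟩ := hSdir B₁ hB₁ B₂ hB₂
  exact hψaep x y D hxy (hScl D hD) (fun hxD => hxA ⟨D, hD, hxD⟩)
    (hψclo.monotone (Set.union_subset_union_left _ (by grind)) hx)
    (hψclo.monotone (Set.union_subset_union_left _ (by grind)) hy)

/-- If ψ is a zero-closure operator with the anti-exchange property, and ρ is a
closure operator whose closed sets are exactly the unions of nonempty up-directed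
families of ψ-closed sets, then ρ satisfies the anti-exchange property. -/
theorem stmt7 {X : Type*} (ψ ρ : Set X → Set X)
    (hψclo : IsClosureOp ψ) (hψzero : ψ ∅ = ∅) (hψaep : AntiExchange ψ)
    (hρclo : IsClosureOp ρ)
    (hclosed : ∀ A : Set X, ρ A = A ↔
      ∃ S : Set (Set X), S.Nonempty ∧ (∀ B ∈ S, ψ B = B) ∧
        (∀ B ∈ S, ∀ B' ∈ S, ∃ D ∈ S, B ∪ B' ⊆ D) ∧ A = ⋃₀ S) :
    AntiExchange ρ :=
  stmt7_general ψ ρ hψclo hψaep hρclo hclosed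
end

section
/- Let (X, φ) be an algebraic convex geometry and C a maximal chain in the lattice L of closed sets. For x ∈ X define h_C(x) = ⋂{C' ∈ C : x ∈ C'}. Then h_C(x) ∈ C for every x, and h_C is injective. -/
open Set Function

section

variable {X : Type*} {φ : Set X → Set X} {C S : Set (Set X)} {A B D : Set X} {x z : X}

theorem IsChain.subset_of_notMem_of_mem {A' : Set X} (hC : IsChain (· ⊆ ·) C) (hA : A ∈ C)
    (hA' : A' ∈ C) (hxA : x ∉ A) (hxA' : x ∈ A') : A ⊆ A' :=
  (hC.total hA hA').resolve_right fun h => hxA (h hxA')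

theorem IsChain.sInter_subset_or_subset_sInter (hC : IsChain (· ⊆ ·) C) (hS : S ⊆ C)
    (hA : A ∈ C) : ⋂₀ S ⊆ A ∨ A ⊆ ⋂₀ S := by
  by_cases h : ∀ B ∈ S, A ⊆ B
  · exact Or.inr (subset_sInter h)
  · push Not at h
    obtain ⟨B, hB, hAB⟩ := h
    exact Or.inl ((sInter_subset_of_mem hB).trans ((hC.total hA (hS hB)).resolve_left hAB))

theorem IsChain.sUnion_subset_or_subset_sUnion (hC : IsChain (· ⊆ ·) C) (hS : S ⊆ C)
    (hA : A ∈ C) : ⋃₀ S ⊆ A ∨ A ⊆ ⋃₀ S := by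
  by_cases h : ∀ B ∈ S, B ⊆ A
  · exact Or.inl (sUnion_subset h)
  · push Not at h
    obtain ⟨B, hB, hBA⟩ := h
    exact Or.inr (((hC.total hA (hS hB)).resolve_right hBA).trans (subset_sUnion_of_mem hB))

theorem IsClosureOp.sInter_closed (hφ : IsClosureOp φ) (hS : ∀ A ∈ S, φ A = A) :
    φ (⋂₀ S) = ⋂₀ S :=
  (subset_sInter fun A hA => (hφ.2.1 _ _ (sInter_subset_of_mem hA)).trans (hS A hA).le).antisymm
    (hφ.1 _)

theorem IsAlgebraicOp.sUnion_closed_of_isChain (halg : IsAlgebraicOp φ) (hφ : IsClosureOp φ)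
    (h0 : φ ∅ = ∅) (hS : IsChain (· ⊆ ·) S) (hcl : ∀ A ∈ S, φ A = A) :
    φ (⋃₀ S) = ⋃₀ S := by
  refine Subset.antisymm ?_ (hφ.1 _)
  rw [halg]
  rintro t ⟨_, ⟨F, hFS, hF, rfl⟩, htF⟩
  rcases S.eq_empty_or_nonempty with rfl | hne
  · rw [sUnion_empty, subset_empty_iff] at hFS
    rw [hFS, h0] at htF
    exact htF.elim
  · obtain ⟨A, hA, hFA⟩ := hS.directedOn.exists_mem_subset_of_finite_of_subset_sUnion hne hF hFS
    exact subset_sUnion_of_mem hA (((hφ.2.1 _ _ hFA).trans (hcl A hA).le) htF)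

namespace IsMaxChainOfClosed

theorem sInter_mem (hC : IsMaxChainOfClosed φ C) (hφ : IsClosureOp φ) (hS : S ⊆ C) :
    ⋂₀ S ∈ C :=
  hC.2.2 _ (hφ.sInter_closed fun _ hA => hC.1 (hS hA))
    fun _ hA => hC.2.1.sInter_subset_or_subset_sInter hS hA

theorem sUnion_mem (hC : IsMaxChainOfClosed φ C) (hφ : IsClosureOp φ) (halg : IsAlgebraicOp φ)
    (h0 : φ ∅ = ∅) (hS : S ⊆ C) : ⋃₀ S ∈ C :=
  hC.2.2 _ (halg.sUnion_closed_of_isChain hφ h0 (hC.2.1.mono hS) fun _ hA => hC.1 (hS hA))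
    fun _ hA => hC.2.1.sUnion_subset_or_subset_sUnion hS hA

theorem closure_union_singleton_eq (hC : IsMaxChainOfClosed φ C) (hφ : IsClosureOp φ)
    (hD : D ∈ C) (hBD : B ⊆ D) (hgap : ∀ A ∈ C, A ⊆ B ∨ D ⊆ A) (hzD : z ∈ D)
    (hzB : z ∉ B) : φ (B ∪ {z}) = D := by
  obtain ⟨hext, hmono, hidem⟩ := hφ
  have hzE : z ∈ φ (B ∪ {z}) := hext _ (Or.inr rfl)
  have hE_subset : ∀ A ∈ C, B ⊆ A → z ∈ A → φ (B ∪ {z}) ⊆ A := fun A hA hBA hzA =>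
    (hmono _ _ (union_subset hBA (singleton_subset_iff.2 hzA))).trans (hC.1 hA).le
  have hE : φ (B ∪ {z}) ∈ C := hC.2.2 _ (hidem _) fun A hA => (hgap A hA).elim
    (fun h => Or.inr (h.trans (subset_union_left.trans (hext _))))
    (fun h => Or.inl (hE_subset A hA (hBD.trans h) (h hzD)))
  exact (hE_subset D hD hBD hzD).antisymm ((hgap _ hE).resolve_left fun h => hzB (h hzE))

end IsMaxChainOfClosed

/-- `h_C` in the paper's notation. -/
def chainHull (C : Set (Set X)) (x : X) : Set X := ⋂₀ {A | A ∈ C ∧ x ∈ A}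

/-- The lower cover of `h_C(x)` in `C`. -/
def chainBelow (C : Set (Set X)) (x : X) : Set X := ⋃₀ {A | A ∈ C ∧ x ∉ A}

theorem mem_chainHull : x ∈ chainHull C x := mem_sInter.2 fun _ hA => hA.2

theorem chainHull_subset (hA : A ∈ C) (hx : x ∈ A) : chainHull C x ⊆ A :=
  sInter_subset_of_mem ⟨hA, hx⟩

theorem notMem_chainBelow : x ∉ chainBelow C x := fun ⟨_, hA, hxA⟩ => hA.2 hxA

theorem subset_chainBelow_or_chainHull_subset (hA : A ∈ C) :
    A ⊆ chainBelow C x ∨ chainHull C x ⊆ A := by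
  by_cases hx : x ∈ A
  · exact Or.inr (chainHull_subset hA hx)
  · exact Or.inl (subset_sUnion_of_mem ⟨hA, hx⟩)

theorem IsChain.chainBelow_subset_chainHull (hC : IsChain (· ⊆ ·) C) :
    chainBelow C x ⊆ chainHull C x :=
  sUnion_subset fun _ hA => subset_sInter fun _ hA' =>
    hC.subset_of_notMem_of_mem hA.1 hA'.1 hA.2 hA'.2

namespace IsMaxChainOfClosed

theorem chainHull_mem (hC : IsMaxChainOfClosed φ C) (hφ : IsClosureOp φ) : chainHull C x ∈ C :=
  hC.sInter_mem hφ fun _ hA => hA.1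

theorem chainBelow_mem (hC : IsMaxChainOfClosed φ C) (hφ : IsClosureOp φ)
    (halg : IsAlgebraicOp φ) (h0 : φ ∅ = ∅) : chainBelow C x ∈ C :=
  hC.sUnion_mem hφ halg h0 fun _ hA => hA.1

theorem closure_chainBelow_union_singleton (hC : IsMaxChainOfClosed φ C) (hφ : IsClosureOp φ)
    (hz : z ∈ chainHull C x) (hzB : z ∉ chainBelow C x) : φ (chainBelow C x ∪ {z}) = chainHull C x :=
  hC.closure_union_singleton_eq hφ (hC.chainHull_mem hφ)
    hC.2.1.chainBelow_subset_chainHull (fun _ hA => subset_chainBelow_or_chainHull_subset hA)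
    hz hzB

theorem chainHull_injective (hC : IsMaxChainOfClosed φ C) (hacg : IsAlgConvexGeometry φ) :
    Injective (chainHull C) := by
  obtain ⟨hφ, halg, h0, hanti⟩ := hacg
  intro x y hxy
  by_contra hne
  have hB := hC.chainBelow_mem (x := x) hφ halg h0
  have hyD : y ∈ chainHull C x := hxy ▸ mem_chainHull
  have hyB : y ∉ chainBelow C x := fun hy =>
    notMem_chainBelow ((hxy ▸ chainHull_subset hB hy : chainHull C x ⊆ _) mem_chainHull)
  have hx := hC.closure_chainBelow_union_singleton hφ (mem_chainHull (x := x))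
    notMem_chainBelow
  have hy := hC.closure_chainBelow_union_singleton hφ hyD hyB
  exact hanti x y _ hne (hC.1 hB) notMem_chainBelow (hy ▸ mem_chainHull) (hx ▸ hyD)

end IsMaxChainOfClosed

end

/-- For a maximal chain C of an algebraic convex geometry, the map
h_C(x) = ⋂ {C' ∈ C : x ∈ C'} lands in C and is injective. -/
theorem stmt10 {X : Type*} (φ : Set X → Set X)
    (hacg : IsAlgConvexGeometry φ) (C : Set (Set X))
    (hC : IsMaxChainOfClosed φ C) :
    (∀ x : X, (⋂₀ {C' | C' ∈ C ∧ x ∈ C'}) ∈ C) ∧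
      Function.Injective (fun x : X => ⋂₀ {C' | C' ∈ C ∧ x ∈ C'}) :=
  ⟨fun _ => hC.chainHull_mem hacg.1, hC.chainHull_injective hacg⟩
end

section
/- If ≤ is a total ordering of X compatible with a closure system (X, φ) (meaning every down-set of (X, ≤) is φ-closed), then the family Id(X, ≤) of down-sets of (X, ≤) is a maximal chain in the lattice of φ-closed sets. -/
theorem isLowerSet_of_forall_subset_Iic_or_Iic_subset {α : Type*} [PartialOrder α] {T : Set α}
    (h : ∀ b, T ⊆ Set.Iic b ∨ Set.Iic b ⊆ T) : IsLowerSet T := by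
  intro a b hba haT
  rcases h b with hT | hb
  · exact le_antisymm hba (hT haT) ▸ haT
  · exact hb le_rfl

theorem stmt13_general {X : Type*} [LinearOrder X] (φ : Set X → Set X)
    (hcomp : ∀ A : Set X, IsLowerSet A → φ A = A) :
    IsMaxChainOfClosed φ {A : Set X | IsLowerSet A} :=
  ⟨fun A hA => hcomp A hA,
    fun _ hA _ hB _ => hA.total hB,
    fun _ _ hT => isLowerSet_of_forall_subset_Iic_or_Iic_subset fun b => hT _ (isLowerSet_Iic b)⟩

/-- If a total (linear) order on X is compatible with a closure system (every
down-set is closed), then the family of down-sets is a maximal chain in the lattice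
of closed sets. -/
theorem stmt13 {X : Type*} [LinearOrder X] (φ : Set X → Set X)
    (hclo : IsClosureOp φ) (hcomp : ∀ A : Set X, IsLowerSet A → φ A = A) :
    IsMaxChainOfClosed φ {A : Set X | IsLowerSet A} :=
  stmt13_general φ hcomp
end

section
/- Every closed set of an algebraic closure system lies on some maximal chain of the lattice of closed sets, and for an algebraic convex geometry, the union of the families Id(X, ≤_C), taken over compatible total orders ≤_C arising from all maximal chains C, equals the full family of closed sets. -/
/-- The least member of `C` containing `x`, when `C` is a maximal chain of closed sets. -/
def minContaining {X : Type*} (C : Set (Set X)) (x : X) : Set X :=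
  ⋂₀ {C' | C' ∈ C ∧ x ∈ C'}

/-- The paper's `Id(X, ≤_C)`. -/
def chainDownSets {X : Type*} (C : Set (Set X)) : Set (Set X) :=
  {A | ∀ x y, minContaining C x ⊆ minContaining C y → y ∈ A → x ∈ A}

section

variable {X : Type*}

theorem closed_sInter {φ : Set X → Set X} (hext : ∀ A, A ⊆ φ A)
    (hmono : ∀ A B, A ⊆ B → φ A ⊆ φ B) {S : Set (Set X)} (hS : ∀ A ∈ S, φ A = A) :
    φ (⋂₀ S) = ⋂₀ S :=
  (Set.subset_sInter fun A hA => hS A hA ▸ hmono _ _ (Set.sInter_subset_of_mem hA)).antisymm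
    (hext _)

theorem closed_of_forall_finite_subset {φ : Set X → Set X} (hext : ∀ A, A ⊆ φ A)
    (halg : IsAlgebraicOp φ) {Y : Set X} (hY : ∀ B ⊆ Y, B.Finite → φ B ⊆ Y) :
    φ Y = Y := by
  refine Set.Subset.antisymm ?_ (hext Y)
  rw [halg Y]
  rintro z ⟨_, ⟨B, hBY, hB, rfl⟩, hzB⟩
  exact hY B hBY hB hzB

theorem exists_isMaxChainOfClosed (φ : Set X → Set X) {Y : Set X} (hY : φ Y = Y) :
    ∃ C, IsMaxChainOfClosed φ C ∧ Y ∈ C := by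
  let r : {A : Set X // φ A = A} → {A : Set X // φ A = A} → Prop := fun a b => a.1 ⊆ b.1
  obtain ⟨t, htmax, hYt⟩ :=
    (Set.subsingleton_singleton (a := (⟨Y, hY⟩ : {A // φ A = A}))).isChain.exists_maxChain
      (r := r)
  refine ⟨Subtype.val '' t, ⟨?_, ?_, ?_⟩, ⟨⟨Y, hY⟩, hYt rfl, rfl⟩⟩
  · rintro _ ⟨a, _, rfl⟩
    exact a.2
  · rintro _ ⟨a, ha, rfl⟩ _ ⟨b, hb, rfl⟩ hne
    exact htmax.1 ha hb fun h => hne (congrArg Subtype.val h)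
  · intro T hT hcomp
    have hchain : IsChain r (insert ⟨T, hT⟩ t) :=
      htmax.1.insert fun b hb _ => hcomp b.1 ⟨b, hb, rfl⟩
    exact ⟨⟨T, hT⟩, htmax.2 hchain (Set.subset_insert _ _) ▸ Set.mem_insert _ _, rfl⟩

theorem mem_minContaining (C : Set (Set X)) (x : X) : x ∈ minContaining C x :=
  Set.mem_sInter.2 fun _ h => h.2

theorem minContaining_subset_of_mem {C : Set (Set X)} {A : Set X} {x : X} (hA : A ∈ C)
    (hx : x ∈ A) : minContaining C x ⊆ A :=
  Set.sInter_subset_of_mem ⟨hA, hx⟩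

theorem minContaining_subset_minContaining {C : Set (Set X)} {x y : X}
    (h : x ∈ minContaining C y) : minContaining C x ⊆ minContaining C y :=
  Set.subset_sInter fun _ hA => minContaining_subset_of_mem hA.1 (Set.mem_sInter.1 h _ hA)

theorem mem_chainDownSets_of_mem {C : Set (Set X)} {A : Set X} (hA : A ∈ C) :
    A ∈ chainDownSets C := fun x _ hxy hy =>
  hxy.trans (minContaining_subset_of_mem hA hy) (mem_minContaining C x)

theorem minContaining_subset_of_mem_chainDownSets {C : Set (Set X)} {A : Set X}
    (hA : A ∈ chainDownSets C) {y : X} (hy : y ∈ A) : minContaining C y ⊆ A :=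
  fun _ hz => hA _ y (minContaining_subset_minContaining hz) hy

namespace IsMaxChainOfClosed

variable {φ : Set X → Set X} {C : Set (Set X)}

theorem minContaining_mem (hC : IsMaxChainOfClosed φ C) (hext : ∀ A, A ⊆ φ A)
    (hmono : ∀ A B, A ⊆ B → φ A ⊆ φ B) (x : X) : minContaining C x ∈ C := by
  obtain ⟨hCcl, hCch, hCmax⟩ := hC
  refine hCmax _ (closed_sInter hext hmono fun A hA => hCcl hA.1) fun A hA => ?_
  by_cases hx : x ∈ A
  · exact Or.inl (minContaining_subset_of_mem hA hx)
  · refine Or.inr (Set.subset_sInter fun C' hC' => ?_)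
    exact (hCch.total hA hC'.1).resolve_right fun h => hx (h hC'.2)

theorem exists_subset_minContaining (hC : IsMaxChainOfClosed φ C) (hext : ∀ A, A ⊆ φ A)
    (hmono : ∀ A B, A ⊆ B → φ A ⊆ φ B) {B : Set X} (hB : B.Finite) (hBne : B.Nonempty) :
    ∃ b ∈ B, B ⊆ minContaining C b := by
  obtain ⟨b, hbB, hbmax⟩ := hB.exists_maximalFor (minContaining C) B hBne
  refine ⟨b, hbB, fun a ha => ?_⟩
  have hab : minContaining C a ⊆ minContaining C b :=
    (hC.2.1.total (hC.minContaining_mem hext hmono a) (hC.minContaining_mem hext hmono b)).elim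
      id (hbmax ha)
  exact hab (mem_minContaining C a)

theorem closed_of_mem_chainDownSets (hC : IsMaxChainOfClosed φ C) (hext : ∀ A, A ⊆ φ A)
    (hmono : ∀ A B, A ⊆ B → φ A ⊆ φ B) (halg : IsAlgebraicOp φ) (hempty : φ ∅ = ∅) {A : Set X}
    (hA : A ∈ chainDownSets C) : φ A = A := by
  refine closed_of_forall_finite_subset hext halg fun B hBA hB => ?_
  rcases B.eq_empty_or_nonempty with rfl | hBne
  · simp [hempty]
  obtain ⟨b, hbB, hBb⟩ := hC.exists_subset_minContaining hext hmono hB hBne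
  calc φ B ⊆ minContaining C b := hC.1 (hC.minContaining_mem hext hmono b) ▸ hmono _ _ hBb
    _ ⊆ A := minContaining_subset_of_mem_chainDownSets hA (hBA hbB)

end IsMaxChainOfClosed

end

/-- Every closed set of an algebraic closure system lies on some maximal chain of
closed sets; and for an algebraic convex geometry, the union of the down-set
families Id(X, ≤_C) over all maximal chains C is the whole family of closed sets. -/
theorem stmt17 {X : Type*} (φ : Set X → Set X)
    (hclo : IsClosureOp φ) (halg : IsAlgebraicOp φ) :
    (∀ Y : Set X, φ Y = Y → ∃ C : Set (Set X), IsMaxChainOfClosed φ C ∧ Y ∈ C) ∧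
      (φ ∅ = ∅ → AntiExchange φ →
        {Y | φ Y = Y} =
          ⋃₀ {D : Set (Set X) | ∃ C : Set (Set X), IsMaxChainOfClosed φ C ∧
            D = {A : Set X | ∀ x y : X,
              (⋂₀ {C' | C' ∈ C ∧ x ∈ C'}) ⊆ (⋂₀ {C' | C' ∈ C ∧ y ∈ C'}) →
              y ∈ A → x ∈ A}}) := by
  obtain ⟨hext, hmono, -⟩ := hclo
  refine ⟨fun Y hY => exists_isMaxChainOfClosed φ hY, fun hempty _ => ?_⟩
  change {Y | φ Y = Y} = ⋃₀ {D | ∃ C, IsMaxChainOfClosed φ C ∧ D = chainDownSets C}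
  ext Y
  constructor
  · intro hY
    obtain ⟨C, hC, hYC⟩ := exists_isMaxChainOfClosed φ hY
    exact ⟨_, ⟨C, hC, rfl⟩, mem_chainDownSets_of_mem hYC⟩
  · rintro ⟨_, ⟨C, hC, rfl⟩, hY⟩
    exact hC.closed_of_mem_chainDownSets hext hmono halg hempty hY
end

section
/- In an algebraic convex geometry (X, φ), if Y is a closed set and Y ≠ X is such that Y has an upper cover Z in the lattice of closed sets, then Z = φ(Y ∪ {x}) = Y ∪ {x} for some x ∈ X \ Y; moreover Z as a set is obtained by adding exactly one point to Y. -/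
/-- In an algebraic convex geometry, an upper cover Z of a closed set Y ≠ X is
obtained by adding exactly one point: Z = φ(Y ∪ {x}) = Y ∪ {x}. -/
theorem stmt19 {X : Type*} (φ : Set X → Set X)
    (hacg : IsAlgConvexGeometry φ) (Y Z : Set X)
    (hY : φ Y = Y) (hYne : Y ≠ Set.univ) (hZ : φ Z = Z) (hlt : Y ⊂ Z)
    (hcov : ∀ T, φ T = T → Y ⊂ T → T ⊂ Z → False) :
    ∃ x : X, x ∉ Y ∧ Z = φ (Y ∪ {x}) ∧ Z = Y ∪ {x} := by
  obtain ⟨⟨hext, hmono, hidem⟩, _, _, hae⟩ := hacg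
  -- key: for any w ∈ Z \ Y, Z = φ (Y ∪ {w})
  have key : ∀ w, w ∈ Z → w ∉ Y → Z = φ (Y ∪ {w}) := by
    intro w hwZ hwY
    have hsub : φ (Y ∪ {w}) ⊆ Z := by
      have : Y ∪ {w} ⊆ Z := Set.union_subset hlt.1 (by simpa using hwZ)
      calc φ (Y ∪ {w}) ⊆ φ Z := hmono _ _ this
        _ = Z := hZ
    have hYsub : Y ⊂ φ (Y ∪ {w}) := by
      constructor
      · exact (Set.subset_union_left).trans (hext _)
      · intro h
        exact hwY (h (hext _ (Set.mem_union_right _ rfl)))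
    by_contra hne
    exact hcov (φ (Y ∪ {w})) (hidem _) hYsub ⟨hsub, fun h => hne (le_antisymm hsub h).symm⟩
  obtain ⟨x, hxZ, hxY⟩ := Set.exists_of_ssubset hlt
  refine ⟨x, hxY, key x hxZ hxY, ?_⟩
  apply Set.Subset.antisymm
  · intro z hzZ
    by_contra hz
    simp only [Set.mem_union, Set.mem_singleton_iff, not_or] at hz
    obtain ⟨hzY, hzx⟩ := hz
    have h1 : z ∈ φ (Y ∪ {x}) := (key x hxZ hxY) ▸ hzZ
    have h2 : x ∉ φ (Y ∪ {z}) := hae z x Y hzx hY hzY h1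
    exact h2 ((key z hzZ hzY) ▸ hxZ)
  · exact Set.union_subset hlt.1 (by simpa using hxZ)
end
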